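/- Upper bound validity for the BnB pole search: let n ∈ ℝ³ be nonzero, τ ≥ 0 with τ ≤ ‖n‖, and set ξ = arcsin(τ/‖n‖). If h, h_c are unit vectors with ∠(h, h_c) ≤ α, and |⟪n, h⟫| ≤ τ, then |⟪n, h_c⟫| ≤ ‖n‖·sin(α + ξ) whenever α + ξ < π/2, and trivially |⟪n, h_c⟫| ≤ ‖n‖ always. Hence every unit vector in the branch satisfying the inlier constraint is counted by the upper-bound test at the branch center. -/

import Mathlib

/-!
Write `θ = ∠(n, h)` and `θ_c = ∠(n, h_c)`, so that `⟪n, h⟫ = ‖n‖ cos θ` and `⟪n, h_c⟫ = ‖n‖ cos θ_c`.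
The inlier constraint says `|cos θ| ≤ sin ξ`, i.e. `θ` lies within `ξ` of `π/2`. The triangle
inequality for angles between vectors puts `θ_c` within `∠(h, h_c) ≤ α` of `θ`, hence within
`α + ξ` of `π/2`, which gives `|cos θ_c| ≤ sin (α + ξ)` as long as `α + ξ ≤ π/2`.
-/

open Real RealInnerProductSpace InnerProductGeometry

theorem Real.abs_sin_le_sin_add {ψ ψ' ξ α : ℝ} (hψ : |ψ| ≤ π / 2) (hξ : -(π / 2) ≤ ξ)
    (hdist : |ψ' - ψ| ≤ α) (hsum : α + ξ ≤ π / 2) (hsin : |sin ψ| ≤ sin ξ) :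
    |sin ψ'| ≤ sin (α + ξ) := by
  have hψξ : |ψ| ≤ ξ := by
    by_contra! hlt
    rw [abs_sin_eq_sin_abs_of_abs_le_pi (by linarith [pi_pos])] at hsin
    exact (sin_lt_sin_of_lt_of_le_pi_div_two hξ hψ hlt).not_ge hsin
  have hψ' : |ψ'| ≤ α + ξ := by
    linarith [abs_sub_abs_le_abs_sub ψ' ψ]
  rw [abs_sin_eq_sin_abs_of_abs_le_pi (by linarith [pi_pos])]
  exact sin_le_sin_of_le_of_le_pi_div_two (by linarith [abs_nonneg ψ', pi_pos]) hsum hψ'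

theorem Real.abs_cos_le_sin_add {θ θ' ξ α : ℝ} (hθ : θ ∈ Set.Icc 0 π) (hξ : -(π / 2) ≤ ξ)
    (hdist : |θ' - θ| ≤ α) (hsum : α + ξ ≤ π / 2) (hcos : |cos θ| ≤ sin ξ) :
    |cos θ'| ≤ sin (α + ξ) := by
  rw [← sin_pi_div_two_sub] at hcos ⊢
  refine abs_sin_le_sin_add (abs_le.2 ⟨by linarith [hθ.2], by linarith [hθ.1]⟩) hξ ?_ hsum hcos
  rwa [show π / 2 - θ' - (π / 2 - θ) = -(θ' - θ) by ring, abs_neg]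

namespace InnerProductGeometry

variable {V : Type*} [NormedAddCommGroup V] [InnerProductSpace ℝ V]

theorem abs_angle_sub_angle_le (x y z : V) : |angle x z - angle x y| ≤ angle y z := by
  rw [abs_sub_le_iff]
  constructor
  · linarith [angle_le_angle_add_angle x y z]
  · linarith [angle_le_angle_add_angle x z y, angle_comm z y]

theorem angle_of_norm_eq_one {x y : V} (hx : ‖x‖ = 1) (hy : ‖y‖ = 1) :
    angle x y = arccos ⟪x, y⟫ := by
  simp [angle, hx, hy]

theorem abs_inner_eq_norm_mul_abs_cos_angle (x : V) {u : V} (hu : ‖u‖ = 1) :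
    |⟪x, u⟫| = ‖x‖ * |cos (angle x u)| := by
  rw [← cos_angle_mul_norm_mul_norm, hu, mul_one, abs_mul, abs_norm, mul_comm]

end InnerProductGeometry

theorem bnb_upper_bound_validity
    (n h hc : EuclideanSpace ℝ (Fin 3))
    (hn : ‖n‖ > 0) (hh : ‖h‖ = 1) (hhc : ‖hc‖ = 1)
    (τ α ξ : ℝ) (hτ0 : 0 ≤ τ) (hτn : τ ≤ ‖n‖)
    (hξ : ξ = Real.arcsin (τ / ‖n‖))
    (hangle : Real.arccos ⟪h, hc⟫ ≤ α)
    (hin : |⟪n, h⟫| ≤ τ) :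
    (α + ξ < π / 2 → |⟪n, hc⟫| ≤ ‖n‖ * Real.sin (α + ξ)) ∧ |⟪n, hc⟫| ≤ ‖n‖ := by
  refine ⟨fun hsum => ?_, by simpa [hhc] using abs_real_inner_le_norm n hc⟩
  have hsinξ : sin ξ = τ / ‖n‖ := by
    rw [hξ, sin_arcsin (by linarith [div_nonneg hτ0 hn.le]) ((div_le_one hn).2 hτn)]
  have hcos : |cos (angle n h)| ≤ sin ξ := by
    rw [hsinξ, le_div_iff₀ hn, mul_comm, ← abs_inner_eq_norm_mul_abs_cos_angle n hh]
    exact hin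
  have hdist : |angle n hc - angle n h| ≤ α :=
    (abs_angle_sub_angle_le n h hc).trans (angle_of_norm_eq_one hh hhc ▸ hangle)
  rw [abs_inner_eq_norm_mul_abs_cos_angle n hhc]
  gcongr
  exact abs_cos_le_sin_add ⟨angle_nonneg n h, angle_le_pi n h⟩ (hξ ▸ neg_pi_div_two_le_arcsin _)
    hdist hsum.le hcos
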